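/- arXiv:2002.08576 — 3 statements merged into one kernel-verified Lean document; each statement's English description precedes it below -/
import Mathlib

section
/- For every secant plane π, |α(π)| = (q^2+q)/2 and |β(π)| = (q^2-q)/2. -/
open Submodule Set

/-- The points of `PG(3,q)`: the 1-dimensional subspaces of a 4-dimensional
vector space over the field `K` of order `q`. -/
def pgPoint (K : Type) [Field K] : Set (Submodule K (Fin 4 → K)) :=
  {W | Module.finrank K ↥W = 1}

/-- The lines of `PG(3,q)`: the 2-dimensional subspaces. -/
def pgLine (K : Type) [Field K] : Set (Submodule K (Fin 4 → K)) :=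
  {W | Module.finrank K ↥W = 2}

/-- The planes of `PG(3,q)`: the 3-dimensional subspaces. -/
def pgPlane (K : Type) [Field K] : Set (Submodule K (Fin 4 → K)) :=
  {W | Module.finrank K ↥W = 3}

/-- The lines of the family `S` passing through the point `p`. -/
def linesThru (K : Type) [Field K] (S : Set (Submodule K (Fin 4 → K)))
    (p : Submodule K (Fin 4 → K)) : Set (Submodule K (Fin 4 → K)) :=
  {l | l ∈ S ∧ p ≤ l}

/-- The lines of the family `S` contained in the plane `π` (the set `S_π`). -/
def linesIn (K : Type) [Field K] (S : Set (Submodule K (Fin 4 → K)))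
    (π : Submodule K (Fin 4 → K)) : Set (Submodule K (Fin 4 → K)) :=
  {l | l ∈ S ∧ l ≤ π}

/-- The lines of `S_π` belonging to the pencil of lines of the plane `π`
through the point `p`. -/
def pencilS (K : Type) [Field K] (S : Set (Submodule K (Fin 4 → K)))
    (p π : Submodule K (Fin 4 → K)) : Set (Submodule K (Fin 4 → K)) :=
  {l | l ∈ S ∧ p ≤ l ∧ l ≤ π}

/-- Property (P1): every point lies on exactly `q(q+1)/2` or exactly `q^2`
lines of `S`, and both numbers are attained. -/
def P1 (K : Type) [Field K] (S : Set (Submodule K (Fin 4 → K))) (q : ℕ) : Prop :=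
  (∀ p ∈ pgPoint K, (linesThru K S p).ncard = q * (q + 1) / 2 ∨
      (linesThru K S p).ncard = q ^ 2) ∧
  (∃ p ∈ pgPoint K, (linesThru K S p).ncard = q * (q + 1) / 2) ∧
  (∃ p ∈ pgPoint K, (linesThru K S p).ncard = q ^ 2)

/-- Property (P2): every plane contains exactly `q(q+1)/2` or exactly `q^2`
lines of `S`. -/
def P2 (K : Type) [Field K] (S : Set (Submodule K (Fin 4 → K))) (q : ℕ) : Prop :=
  ∀ π ∈ pgPlane K, (linesIn K S π).ncard = q * (q + 1) / 2 ∨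
    (linesIn K S π).ncard = q ^ 2

/-- Property (P2a): if a plane contains `q^2` lines of `S`, then every pencil of
lines in that plane contains `0` or `q` lines of `S`. -/
def P2a (K : Type) [Field K] (S : Set (Submodule K (Fin 4 → K))) (q : ℕ) : Prop :=
  ∀ π ∈ pgPlane K, (linesIn K S π).ncard = q ^ 2 →
    ∀ p ∈ pgPoint K, p ≤ π →
      (pencilS K S p π).ncard = 0 ∨ (pencilS K S p π).ncard = q

/-- Property (P2b): if a plane contains `q(q+1)/2` lines of `S`, then every
pencil of lines in that plane contains `(q-1)/2`, `(q+1)/2` or `q` lines of `S`. -/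
def P2b (K : Type) [Field K] (S : Set (Submodule K (Fin 4 → K))) (q : ℕ) : Prop :=
  ∀ π ∈ pgPlane K, (linesIn K S π).ncard = q * (q + 1) / 2 →
    ∀ p ∈ pgPoint K, p ≤ π →
      (pencilS K S p π).ncard = (q - 1) / 2 ∨
      (pencilS K S p π).ncard = (q + 1) / 2 ∨
      (pencilS K S p π).ncard = q

/-- A point is black if it lies on exactly `q^2` lines of `S`. -/
def IsBlack (K : Type) [Field K] (S : Set (Submodule K (Fin 4 → K))) (q : ℕ)
    (p : Submodule K (Fin 4 → K)) : Prop :=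
  p ∈ pgPoint K ∧ (linesThru K S p).ncard = q ^ 2

/-- A plane is tangent if it contains exactly `q^2` lines of `S`. -/
def IsTangent (K : Type) [Field K] (S : Set (Submodule K (Fin 4 → K))) (q : ℕ)
    (π : Submodule K (Fin 4 → K)) : Prop :=
  π ∈ pgPlane K ∧ (linesIn K S π).ncard = q ^ 2

/-- A plane is secant if it contains exactly `q(q+1)/2` lines of `S`. -/
def IsSecant (K : Type) [Field K] (S : Set (Submodule K (Fin 4 → K))) (q : ℕ)
    (π : Submodule K (Fin 4 → K)) : Prop :=
  π ∈ pgPlane K ∧ (linesIn K S π).ncard = q * (q + 1) / 2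

/-- For a secant plane `π`, the set `α(π)` of points of `π` lying on exactly
`(q-1)/2` lines of `S_π`. -/
def alphaSet (K : Type) [Field K] (S : Set (Submodule K (Fin 4 → K))) (q : ℕ)
    (π : Submodule K (Fin 4 → K)) : Set (Submodule K (Fin 4 → K)) :=
  {p | p ∈ pgPoint K ∧ p ≤ π ∧ (pencilS K S p π).ncard = (q - 1) / 2}

/-- For a secant plane `π`, the set `β(π)` of points of `π` lying on exactly
`(q+1)/2` lines of `S_π`. -/
def betaSet (K : Type) [Field K] (S : Set (Submodule K (Fin 4 → K))) (q : ℕ)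
    (π : Submodule K (Fin 4 → K)) : Set (Submodule K (Fin 4 → K)) :=
  {p | p ∈ pgPoint K ∧ p ≤ π ∧ (pencilS K S p π).ncard = (q + 1) / 2}

/-- For a secant plane `π`, the set `γ(π)` of points of `π` lying on exactly
`q` lines of `S_π`. -/
def gammaSet (K : Type) [Field K] (S : Set (Submodule K (Fin 4 → K))) (q : ℕ)
    (π : Submodule K (Fin 4 → K)) : Set (Submodule K (Fin 4 → K)) :=
  {p | p ∈ pgPoint K ∧ p ≤ π ∧ (pencilS K S p π).ncard = q}

/-! In a secant plane `π` with `m = q(q+1)/2` lines of `S`, every line of `π` has `q + 1` points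
and two distinct lines meet in exactly one point. Double counting incidences and pairs of lines
through a point gives `∑ nₚ = m(q+1)` and `∑ nₚ² = m² + mq` for the pencil sizes `nₚ` over the
`q² + q + 1` points of `π`. As each `nₚ` is one of `k, k+1, 2k+1` (where `q = 2k+1`), the sum
`∑ (nₚ - x)(nₚ - y)` over two of these values counts the points whose pencil has the third. -/

open Module LinearAlgebra.Projectivization

open Finset in
theorem Finset.sum_sub_mul_sub_eq_card_filter_mul {ι R : Type*} [CommRing R] [DecidableEq R]
    (s : Finset ι) (f : ι → R) (x y z : R) (hf : ∀ i ∈ s, f i = x ∨ f i = y ∨ f i = z) :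
    ∑ i ∈ s, (f i - x) * (f i - y) = #{i ∈ s | f i = z} * ((z - x) * (z - y)) := by
  rw [← Finset.sum_filter_of_ne (p := fun i => f i = z), Finset.sum_congr rfl
    (fun i hi => by rw [(Finset.mem_filter.1 hi).2]), Finset.sum_const, nsmul_eq_mul]
  intro i hi hne
  rcases hf i hi with h | h | h <;> simp_all

section DoubleCounting
open Finset
variable {α β : Type*} [DecidableEq β] {P : Finset α} {L : Finset β} {r : α → β → Prop}
  [∀ a b, Decidable (r a b)]

theorem Finset.sum_card_bipartiteAbove_sq {s : ℕ}
    (hline : ∀ l ∈ L, #(P.bipartiteBelow r l) = s)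
    (hmeet : ∀ l ∈ L, ∀ l' ∈ L, l ≠ l' → #{p ∈ P | r p l ∧ r p l'} = 1) :
    ∑ p ∈ P, #(L.bipartiteAbove r p) ^ 2 + #L = #L ^ 2 + #L * s := by
  have hpairs : ∑ p ∈ P, #(L.bipartiteAbove r p) ^ 2
      = ∑ x ∈ L ×ˢ L, #{p ∈ P | r p x.1 ∧ r p x.2} := by
    simp_rw [sq, ← Finset.card_product, Finset.card_filter]
    rw [Finset.sum_comm]
    refine Finset.sum_congr rfl fun p _ => ?_
    rw [← Finset.card_filter]
    congr 1
    ext x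
    simp [bipartiteAbove, and_and_and_comm]
  have hdiag : ∑ x ∈ L.diag, #{p ∈ P | r p x.1 ∧ r p x.2} = #L * s := by
    rw [Finset.sum_diag]
    simp_rw [and_self]
    exact Finset.sum_const_nat hline
  have hoffDiag : ∑ x ∈ L.offDiag, #{p ∈ P | r p x.1 ∧ r p x.2} = #L.offDiag := by
    rw [Finset.card_eq_sum_ones]
    refine Finset.sum_congr rfl fun x hx => ?_
    obtain ⟨h1, h2, hne⟩ := Finset.mem_offDiag.1 hx
    exact hmeet _ h1 _ h2 hne
  rw [hpairs, ← Finset.diag_union_offDiag, Finset.sum_union (Finset.disjoint_diag_offDiag L),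
    hdiag, hoffDiag, Finset.offDiag_card]
  have : #L ≤ #L * #L := Nat.le_mul_self _
  rw [sq]; omega

end DoubleCounting

section Geometry
variable {K V : Type*} [Field K] [AddCommGroup V] [Module K V]

instance Submodule.finite_of_finite [Finite V] : Finite (Submodule K V) :=
  Finite.of_injective _ SetLike.coe_injective

theorem Submodule.ncard_finrank_eq_one_le (W : Submodule K V) :
    {p : Submodule K V | finrank K p = 1 ∧ p ≤ W}.ncard = Nat.card (ℙ K W) := by
  rw [← Nat.card_coe_set_eq, Nat.card_congr (Projectivization.equivSubmodule K W)]
  symm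
  refine Nat.card_congr (((Submodule.mapIic W).toEquiv.subtypeEquiv fun H => ?_).trans
    ((Equiv.subtypeSubtypeEquivSubtypeInter _ (fun p : Submodule K V => finrank K p = 1)).trans
    (Equiv.subtypeEquivRight fun p => and_comm)))
  rw [← finrank_map_subtype_eq W H]; rfl

theorem Submodule.ncard_finrank_eq_one_le_of_finrank_eq_two [Finite K] {W : Submodule K V}
    (hW : finrank K W = 2) :
    {p : Submodule K V | finrank K p = 1 ∧ p ≤ W}.ncard = Nat.card K + 1 := by
  rw [ncard_finrank_eq_one_le, Projectivization.card_of_finrank_two K W hW]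

theorem Submodule.ncard_finrank_eq_one_le_of_finrank_eq_three [Finite K] {W : Submodule K V}
    (hW : finrank K W = 3) :
    {p : Submodule K V | finrank K p = 1 ∧ p ≤ W}.ncard = Nat.card K ^ 2 + Nat.card K + 1 := by
  rw [ncard_finrank_eq_one_le, Projectivization.card_of_finrank K W hW]
  simp only [Finset.sum_range_succ, Finset.range_one, Finset.sum_singleton, pow_zero, pow_one]
  ring

theorem Submodule.finrank_inf_eq_one_of_ne [FiniteDimensional K V] {l l' π : Submodule K V}
    (hl : finrank K l = 2) (hl' : finrank K l' = 2) (hπ : finrank K π = 3)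
    (hlπ : l ≤ π) (hl'π : l' ≤ π) (hne : l ≠ l') : finrank K ↥(l ⊓ l') = 1 := by
  have hlt : l < l ⊔ l' := by
    refine left_lt_sup.2 fun hle => hne ?_
    exact (eq_of_le_of_finrank_eq hle (hl'.trans hl.symm)).symm
  have hsup_gt := finrank_lt_finrank_of_lt hlt
  have hsup_le := finrank_mono (sup_le hlπ hl'π)
  have := finrank_sup_add_finrank_inf_eq l l'
  omega

end Geometry

section SecantPlane
open Finset
open scoped Classical
variable {K : Type} [Field K] [Fintype K] {S : Set (Submodule K (Fin 4 → K))}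
  {π : Submodule K (Fin 4 → K)}

noncomputable def pointsOn (K : Type) [Field K] [Fintype K] (W : Submodule K (Fin 4 → K)) :
    Finset (Submodule K (Fin 4 → K)) :=
  (Set.toFinite {p | p ∈ pgPoint K ∧ p ≤ W}).toFinset

noncomputable def linesInFinset (K : Type) [Field K] [Fintype K]
    (S : Set (Submodule K (Fin 4 → K))) (π : Submodule K (Fin 4 → K)) :
    Finset (Submodule K (Fin 4 → K)) :=
  (Set.toFinite (linesIn K S π)).toFinset

theorem card_pointsOn_of_mem_pgPlane (hπ : π ∈ pgPlane K) :
    #(pointsOn K π) = Fintype.card K ^ 2 + Fintype.card K + 1 := by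
  rw [pointsOn, ← Set.ncard_eq_toFinset_card, ← Nat.card_eq_fintype_card]
  exact Submodule.ncard_finrank_eq_one_le_of_finrank_eq_three hπ

theorem ncard_pencilS_eq_card_bipartiteAbove (p : Submodule K (Fin 4 → K)) :
    (pencilS K S p π).ncard = #((linesInFinset K S π).bipartiteAbove (· ≤ ·) p) := by
  rw [← Set.ncard_coe_finset]
  congr 1
  ext l
  simp only [pencilS, linesIn, linesInFinset, bipartiteAbove, Set.Finite.toFinset_ofPred,
    coe_filter, mem_filter, Finset.mem_univ, true_and, Set.mem_ofPred_eq]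
  tauto

theorem card_bipartiteBelow_pointsOn {l : Submodule K (Fin 4 → K)} (hl : l ∈ pgLine K)
    (hlπ : l ≤ π) : #((pointsOn K π).bipartiteBelow (· ≤ ·) l) = Fintype.card K + 1 := by
  rw [← Nat.card_eq_fintype_card, ← Submodule.ncard_finrank_eq_one_le_of_finrank_eq_two hl,
    ← Set.ncard_coe_finset]
  congr 1
  ext p
  simp only [bipartiteBelow, pointsOn, coe_filter, Set.Finite.mem_toFinset, Set.mem_ofPred_eq,
    pgPoint]
  exact ⟨fun ⟨⟨hp, _⟩, hpl⟩ => ⟨hp, hpl⟩, fun ⟨hp, hpl⟩ => ⟨⟨hp, hpl.trans hlπ⟩, hpl⟩⟩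

theorem card_filter_pointsOn_le_inf (hπ : π ∈ pgPlane K) {l l' : Submodule K (Fin 4 → K)}
    (hl : l ∈ pgLine K) (hl' : l' ∈ pgLine K) (hlπ : l ≤ π) (hl'π : l' ≤ π) (hne : l ≠ l') :
    #{p ∈ pointsOn K π | p ≤ l ∧ p ≤ l'} = 1 := by
  have hmeet : finrank K ↥(l ⊓ l') = 1 :=
    Submodule.finrank_inf_eq_one_of_ne hl hl' hπ hlπ hl'π hne
  refine card_eq_one.2 ⟨l ⊓ l', ext fun p => ?_⟩
  simp only [pointsOn, mem_filter, Set.Finite.mem_toFinset, Set.mem_ofPred_eq, pgPoint,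
    Finset.mem_singleton, ← le_inf_iff]
  refine ⟨fun ⟨⟨hp, _⟩, hple⟩ => Submodule.eq_of_le_of_finrank_eq hple (hp.trans hmeet.symm),
    ?_⟩
  rintro rfl
  exact ⟨⟨hmeet, inf_le_left.trans hlπ⟩, le_rfl⟩

theorem sum_ncard_pencilS (hS : S ⊆ pgLine K) :
    ∑ p ∈ pointsOn K π, (pencilS K S p π).ncard
      = (linesIn K S π).ncard * (Fintype.card K + 1) := by
  simp_rw [ncard_pencilS_eq_card_bipartiteAbove]
  rw [sum_card_bipartiteAbove_eq_sum_card_bipartiteBelow,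
    Set.ncard_eq_toFinset_card _ (Set.toFinite _)]
  refine sum_const_nat fun l hl => ?_
  obtain ⟨hlS, hlπ⟩ := (Set.Finite.mem_toFinset _).1 hl
  exact card_bipartiteBelow_pointsOn (hS hlS) hlπ

theorem sum_ncard_pencilS_sq (hS : S ⊆ pgLine K) (hπ : π ∈ pgPlane K) :
    ∑ p ∈ pointsOn K π, (pencilS K S p π).ncard ^ 2 + (linesIn K S π).ncard
      = (linesIn K S π).ncard ^ 2 + (linesIn K S π).ncard * (Fintype.card K + 1) := by
  simp_rw [ncard_pencilS_eq_card_bipartiteAbove]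
  rw [Set.ncard_eq_toFinset_card _ (Set.toFinite _)]
  refine sum_card_bipartiteAbove_sq (fun l hl => ?_) fun l hl l' hl' hne => ?_
  · obtain ⟨hlS, hlπ⟩ := (Set.Finite.mem_toFinset _).1 hl
    exact card_bipartiteBelow_pointsOn (hS hlS) hlπ
  · obtain ⟨hlS, hlπ⟩ := (Set.Finite.mem_toFinset _).1 hl
    obtain ⟨hl'S, hl'π⟩ := (Set.Finite.mem_toFinset _).1 hl'
    exact card_filter_pointsOn_le_inf hπ (hS hlS) (hS hl'S) hlπ hl'π hne

theorem card_filter_ncard_pencilS_mul (hS : S ⊆ pgLine K) (hπ : π ∈ pgPlane K) {x y z : ℕ}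
    (hval : ∀ p ∈ pointsOn K π, (pencilS K S p π).ncard = x ∨
      (pencilS K S p π).ncard = y ∨ (pencilS K S p π).ncard = z) :
    #{p ∈ pointsOn K π | (pencilS K S p π).ncard = z} * (((z : ℤ) - x) * ((z : ℤ) - y))
      = ((linesIn K S π).ncard : ℤ) ^ 2 + (linesIn K S π).ncard * Fintype.card K
        - (x + y) * ((linesIn K S π).ncard * (Fintype.card K + 1))
        + x * y * (Fintype.card K ^ 2 + Fintype.card K + 1) := by
  have hsum : (∑ p ∈ pointsOn K π, (pencilS K S p π).ncard : ℤ)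
      = (linesIn K S π).ncard * (Fintype.card K + 1) := by
    exact_mod_cast sum_ncard_pencilS (π := π) hS
  have hsum_sq : (∑ p ∈ pointsOn K π, (pencilS K S p π).ncard ^ 2 : ℤ) + (linesIn K S π).ncard
      = (linesIn K S π).ncard ^ 2 + (linesIn K S π).ncard * (Fintype.card K + 1) := by
    exact_mod_cast sum_ncard_pencilS_sq hS hπ
  have hcard : (#(pointsOn K π) : ℤ) = Fintype.card K ^ 2 + Fintype.card K + 1 := by
    exact_mod_cast card_pointsOn_of_mem_pgPlane hπ
  have hexpand : ∀ n : ℤ, (n - x) * (n - y) = n ^ 2 - (x + y) * n + x * y := fun n => by ring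
  have hclass := sum_sub_mul_sub_eq_card_filter_mul (pointsOn K π)
    (fun p => ((pencilS K S p π).ncard : ℤ)) x y z (fun p hp => by simpa using hval p hp)
  simp only [Nat.cast_inj] at hclass
  rw [← hclass]
  simp_rw [hexpand, sum_add_distrib, sum_sub_distrib, ← mul_sum, sum_const, nsmul_eq_mul]
  rw [hcard]
  linear_combination hsum_sq - (x + y) * hsum

theorem ncard_setOf_pencilS_eq (c : ℕ) :
    {p | p ∈ pgPoint K ∧ p ≤ π ∧ (pencilS K S p π).ncard = c}.ncard
      = #{p ∈ pointsOn K π | (pencilS K S p π).ncard = c} := by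
  rw [← Set.ncard_coe_finset]
  congr 1
  ext p
  simp [pointsOn, and_assoc]

end SecantPlane

theorem stmt_11_general (K : Type) [Field K] [Fintype K] (q : ℕ) (hq : Fintype.card K = q)
    (hq_odd : Odd q) (S : Set (Submodule K (Fin 4 → K))) (hS : S ⊆ pgLine K)
    (h2b : P2b K S q) :
    ∀ π, IsSecant K S q π →
      (alphaSet K S q π).ncard = (q ^ 2 + q) / 2 ∧
      (betaSet K S q π).ncard = (q ^ 2 - q) / 2 := by
  rintro π ⟨hπ, hm⟩
  obtain ⟨k, rfl⟩ := hq_odd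
  have hk₁ : (2 * k + 1 - 1) / 2 = k := by omega
  have hk₂ : (2 * k + 1 + 1) / 2 = k + 1 := by omega
  have hm' : (linesIn K S π).ncard = (2 * k + 1) * (k + 1) := by
    rw [hm, show (2 * k + 1) * (2 * k + 1 + 1) = 2 * ((2 * k + 1) * (k + 1)) by ring,
      Nat.mul_div_cancel_left _ two_pos]
  have hval (p) (hp : p ∈ pointsOn K π) : (pencilS K S p π).ncard = k ∨
      (pencilS K S p π).ncard = k + 1 ∨ (pencilS K S p π).ncard = 2 * k + 1 := by
    obtain ⟨hp, hpπ⟩ := (Set.Finite.mem_toFinset _).1 hp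
    simpa only [hk₁, hk₂] using h2b π hπ hm p hp hpπ
  have hA := card_filter_ncard_pencilS_mul hS hπ (x := k + 1) (y := 2 * k + 1) (z := k)
    fun p hp => by have := hval p hp; tauto
  have hB := card_filter_ncard_pencilS_mul hS hπ (x := k) (y := 2 * k + 1) (z := k + 1)
    fun p hp => by have := hval p hp; tauto
  rw [hm', hq] at hA hB
  push_cast at hA hB
  have hα : (2 * k + 1) ^ 2 + (2 * k + 1) = (2 * k + 1) * (k + 1) * 2 := by ring
  have hβ : (2 * k + 1) ^ 2 - (2 * k + 1) = (2 * k + 1) * k * 2 := Nat.sub_eq_of_eq_add (by ring)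
  rw [alphaSet, betaSet, ncard_setOf_pencilS_eq, ncard_setOf_pencilS_eq, hk₁, hk₂,
    Nat.div_eq_of_eq_mul_left two_pos hα, Nat.div_eq_of_eq_mul_left two_pos hβ]
  have hk : (k : ℤ) + 1 ≠ 0 := by positivity
  have hk' : (k : ℤ) ≠ 0 := by
    have : 1 < Fintype.card K := Fintype.one_lt_card
    omega
  constructor
  · refine Nat.cast_injective (R := ℤ) (mul_right_cancel₀ hk ?_)
    push_cast
    linear_combination hA
  · refine Nat.cast_injective (R := ℤ) (mul_right_cancel₀ hk' ?_)
    push_cast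
    linear_combination -hB

/-- For every secant plane `π`, `|α(π)| = (q^2+q)/2` and
`|β(π)| = (q^2-q)/2`. -/
theorem stmt_11 (K : Type) [Field K] [Fintype K] (q : ℕ) (hq : Fintype.card K = q)
    (hq_odd : Odd q) (S : Set (Submodule K (Fin 4 → K))) (hS : S ⊆ pgLine K)
    (h1 : P1 K S q) (h2 : P2 K S q) (h2a : P2a K S q) (h2b : P2b K S q) :
    ∀ π, IsSecant K S q π →
      (alphaSet K S q π).ncard = (q ^ 2 + q) / 2 ∧
      (betaSet K S q π).ncard = (q ^ 2 - q) / 2 :=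
  stmt_11_general K q hq hq_odd S hS h2b
end

section
/- If π is a secant plane, then every black point contained in π belongs to the set γ(π). -/
/-!
Identify the lines through the black point `p` with the points of the quotient plane
`PG(2,q)` and the planes through `p` with its lines: the lines of `S` through `p` become a set
of `q²` points meeting every line in at most `q` points (by (P2a) and (P2b)). Counting
incidences, the `q² + q + 1` planes through `p` carry `q²(q+1)` lines of `S` through `p`,
while the `q + 1` planes through a line `ℓ ∉ S` on `p` carry only `q²` of them (each line of `S`
through `p` spans one plane with `ℓ`). So every plane through `p` missing `ℓ` carries exactly `q`
of them. Hence a plane `π` through `p` with fewer than `q` lines of `S` through `p` contains all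
`q + 1` lines on `p` outside `S`, i.e. all its lines through `p`, and carries none; for a secant
plane this contradicts (P2b), as `(q-1)/2 ≥ 1` for odd `q`.
-/

open Submodule Set

open Module

instance Submodule.finite_of_finite_field {K V : Type*} [Field K] [Finite K] [AddCommGroup V]
    [Module K V] [FiniteDimensional K V] : Finite (Submodule K V) :=
  have := Module.finite_of_finite K (M := V)
  Finite.of_injective _ SetLike.coe_injective

section SubspaceCounting

variable {K E : Type*} [Field K] [AddCommGroup E] [Module K E]

theorem ncard_finrank_eq_dual [FiniteDimensional K E] {k l : ℕ} (h : k + l = finrank K E) :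
    {U : Submodule K E | finrank K U = k}.ncard =
      {Φ : Submodule K (Dual K E) | finrank K Φ = l}.ncard :=
  Set.ncard_congr (fun U _ => U.dualAnnihilator)
    (fun U hU => by
      have := Subspace.finrank_add_finrank_dualAnnihilator_eq U
      simp only [Set.mem_ofPred_eq] at hU ⊢
      omega)
    (fun _ _ _ _ h => Subspace.dualAnnihilator_inj.mp h)
    (fun Φ hΦ => ⟨Φ.dualCoannihilator, by
      have := Subspace.finrank_add_finrank_dualCoannihilator_eq Φ
      simp only [Set.mem_ofPred_eq] at hΦ ⊢
      omega, Subspace.dualCoannihilator_dualAnnihilator_eq⟩)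

theorem ncard_le_finrank_eq (y : Submodule K E) (r : ℕ) :
    {W : Submodule K E | W ≤ y ∧ finrank K W = r}.ncard =
      {U : Submodule K y | finrank K U = r}.ncard := by
  symm
  refine Set.ncard_congr (fun U _ => U.map y.subtype) ?_ ?_ ?_
  · intro U hU
    exact ⟨Submodule.map_subtype_le y U, (y.finrank_map_subtype_eq U).trans hU⟩
  · intro _ _ _ _ h
    exact Submodule.map_injective_of_injective y.injective_subtype h
  · rintro W ⟨hWy, hW⟩
    have hmap : (W.comap y.subtype).map y.subtype = W := by
      rw [Submodule.map_comap_subtype, inf_eq_right.mpr hWy]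
    refine ⟨W.comap y.subtype, ?_, hmap⟩
    rw [Set.mem_ofPred_eq, ← y.finrank_map_subtype_eq, hmap, hW]

variable [Finite K]

theorem ncard_finrank_eq_one {n : ℕ} (h : finrank K E = n) :
    {U : Submodule K E | finrank K U = 1}.ncard = ∑ i ∈ Finset.range n, Nat.card K ^ i := by
  rw [← Nat.card_coe_set_eq, ← Projectivization.card_of_finrank K E h]
  exact Nat.card_congr (Projectivization.equivSubmodule K E).symm

theorem ncard_finrank_eq_one_of_finrank_eq_two (h : finrank K E = 2) :
    {U : Submodule K E | finrank K U = 1}.ncard = Nat.card K + 1 := by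
  simp [ncard_finrank_eq_one h, Finset.sum_range_succ, add_comm]

theorem ncard_finrank_eq_one_of_finrank_eq_three (h : finrank K E = 3) :
    {U : Submodule K E | finrank K U = 1}.ncard = Nat.card K ^ 2 + Nat.card K + 1 := by
  rw [ncard_finrank_eq_one h]
  simp only [Finset.sum_range_succ, Finset.sum_range_zero]
  ring

theorem ncard_finrank_eq_two_of_finrank_eq_three (h : finrank K E = 3) :
    {U : Submodule K E | finrank K U = 2}.ncard = Nat.card K ^ 2 + Nat.card K + 1 := by
  have : FiniteDimensional K E := .of_finrank_pos (by omega)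
  rw [ncard_finrank_eq_dual (l := 1) (by omega)]
  exact ncard_finrank_eq_one_of_finrank_eq_three (by rw [Subspace.dual_finrank_eq, h])

end SubspaceCounting

section Intervals

variable {K V : Type*} [Field K] [AddCommGroup V] [Module K V] [FiniteDimensional K V]

theorem finrank_map_mkQ_add_finrank {x W : Submodule K V} (h : x ≤ W) :
    finrank K (W.map x.mkQ) + finrank K x = finrank K W := by
  have h1 := (Submodule.quotientQuotientEquivQuotient x W h).finrank_eq
  have h2 := (W.map x.mkQ).finrank_quotient_add_finrank
  have h3 := x.finrank_quotient_add_finrank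
  have h4 := W.finrank_quotient_add_finrank
  omega

theorem finrank_map_mkQ {x y : Submodule K V} (h : x ≤ y) :
    finrank K (y.map x.mkQ) = finrank K y - finrank K x := by
  have := finrank_map_mkQ_add_finrank h
  omega

theorem ncard_between_eq {x y : Submodule K V} (hxy : x ≤ y) (r : ℕ) :
    {W : Submodule K V | x ≤ W ∧ W ≤ y ∧ finrank K W = finrank K x + r}.ncard =
      {U : Submodule K (y.map x.mkQ) | finrank K U = r}.ncard := by
  rw [← ncard_le_finrank_eq]
  refine Set.ncard_congr (fun W _ => W.map x.mkQ) ?_ ?_ ?_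
  · rintro W ⟨hxW, hWy, hW⟩
    have := finrank_map_mkQ_add_finrank hxW
    exact ⟨Submodule.map_mono hWy, by omega⟩
  · rintro W W' ⟨hxW, -⟩ ⟨hxW', -⟩ h
    have := congrArg (Submodule.comap x.mkQ) h
    simp only [Submodule.comap_map_mkQ, sup_eq_right.mpr hxW, sup_eq_right.mpr hxW'] at this
    exact this
  · rintro U ⟨hUy, hU⟩
    have hmap : (U.comap x.mkQ).map x.mkQ = U :=
      Submodule.map_comap_eq_of_surjective x.mkQ_surjective U
    have hx : x ≤ U.comap x.mkQ := x.le_comap_mkQ U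
    have hy : U.comap x.mkQ ≤ y := by
      simpa [Submodule.comap_map_mkQ, sup_eq_right.mpr hxy] using
        Submodule.comap_mono (f := x.mkQ) hUy
    have := finrank_map_mkQ_add_finrank hx
    exact ⟨U.comap x.mkQ, ⟨hx, hy, by rw [hmap] at this; omega⟩, hmap⟩

theorem finrank_sup_eq_three {ℓ l : Submodule K V} (hℓ : finrank K ℓ = 2) (hl : finrank K l = 2)
    (hne : ℓ ≠ l) (hinf : ℓ ⊓ l ≠ ⊥) : finrank K ↥(ℓ ⊔ l) = 3 := by
  have hpos : finrank K ↥(ℓ ⊓ l) ≠ 0 := fun h => hinf (Submodule.finrank_eq_zero.mp h)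
  have hle : finrank K ↥(ℓ ⊓ l) ≤ 2 := hℓ ▸ Submodule.finrank_mono inf_le_left
  have hne2 : finrank K ↥(ℓ ⊓ l) ≠ 2 := fun h => hne <|
    (Submodule.eq_of_le_of_finrank_le inf_le_left (by omega)).symm.trans
      (Submodule.eq_of_le_of_finrank_le inf_le_right (by omega))
  have := Submodule.finrank_sup_add_finrank_inf_eq ℓ l
  omega

end Intervals

theorem Finset.sum_ncard_sep_eq_mul {α β : Type*} {A : Set α} (hA : A.Finite) (T : Finset β)
    (r : α → β → Prop) {c : ℕ} (hc : ∀ a ∈ A, {b ∈ (T : Set β) | r a b}.ncard = c) :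
    ∑ b ∈ T, {a ∈ A | r a b}.ncard = A.ncard * c := by
  classical
  have hsep : ∀ b, {a ∈ A | r a b}.ncard = (hA.toFinset.bipartiteBelow r b).card := fun b => by
    rw [← Set.ncard_coe_finset, Finset.coe_bipartiteBelow]
    simp only [Set.Finite.mem_toFinset]
  have hsep' : ∀ a ∈ hA.toFinset, (T.bipartiteAbove r a).card = c := fun a ha => by
    rw [← Set.ncard_coe_finset, Finset.coe_bipartiteAbove]
    exact hc a (hA.mem_toFinset.mp ha)
  simp_rw [hsep, ← Finset.sum_card_bipartiteAbove_eq_sum_card_bipartiteBelow]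
  rw [Finset.sum_congr rfl hsep', Finset.sum_const, smul_eq_mul, Set.ncard_eq_toFinset_card A hA]

theorem Finset.eq_of_sum_sdiff_eq_card_mul {ι : Type*} [DecidableEq ι] {s t : Finset ι}
    {f : ι → ℕ} {c : ℕ} (hts : t ⊆ s) (hle : ∀ i ∈ s \ t, f i ≤ c)
    (hsum : ∑ i ∈ s, f i = ∑ i ∈ t, f i + (s \ t).card * c) :
    ∀ i ∈ s \ t, f i = c := by
  have hdiff : ∑ i ∈ s \ t, f i = ∑ _i ∈ s \ t, c := by
    rw [Finset.sum_const, smul_eq_mul]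
    have := Finset.sum_sdiff (f := f) hts
    omega
  exact (Finset.sum_eq_sum_iff_of_le hle).mp hdiff

section ProjectiveSpace

variable {K : Type} [Field K]

theorem pencilS_eq_sep {S : Set (Submodule K (Fin 4 → K))}
    {p : Submodule K (Fin 4 → K)} (τ : Submodule K (Fin 4 → K)) :
    pencilS K S p τ = {l ∈ linesThru K S p | l ≤ τ} := by
  ext l
  simp [pencilS, linesThru, and_assoc]

variable [Finite K]

variable (K) in
noncomputable def planesThru (x : Submodule K (Fin 4 → K)) : Finset (Submodule K (Fin 4 → K)) :=
  (Set.toFinite {τ | τ ∈ pgPlane K ∧ x ≤ τ}).toFinset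

theorem mem_planesThru {x τ : Submodule K (Fin 4 → K)} :
    τ ∈ planesThru K x ↔ τ ∈ pgPlane K ∧ x ≤ τ :=
  Set.Finite.mem_toFinset _

theorem planesThru_subset {x y : Submodule K (Fin 4 → K)} (h : x ≤ y) :
    planesThru K y ⊆ planesThru K x := fun _ hτ =>
  mem_planesThru.mpr ⟨(mem_planesThru.mp hτ).1, h.trans (mem_planesThru.mp hτ).2⟩

theorem card_planesThru_of_mem_pgLine {ℓ : Submodule K (Fin 4 → K)} (hℓ : ℓ ∈ pgLine K) :
    (planesThru K ℓ).card = Nat.card K + 1 := by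
  have hℓ : finrank K ℓ = 2 := hℓ
  have hset : (planesThru K ℓ : Set _) =
      {W | ℓ ≤ W ∧ W ≤ ⊤ ∧ finrank K W = finrank K ℓ + 1} := by
    ext τ
    simp [mem_planesThru, pgPlane, hℓ, and_comm]
  rw [← Set.ncard_coe_finset, hset, ncard_between_eq le_top]
  apply ncard_finrank_eq_one_of_finrank_eq_two
  rw [finrank_map_mkQ le_top, finrank_top, finrank_fin_fun, hℓ]

theorem card_planesThru_of_mem_pgPoint {p : Submodule K (Fin 4 → K)} (hp : p ∈ pgPoint K) :
    (planesThru K p).card = Nat.card K ^ 2 + Nat.card K + 1 := by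
  have hp : finrank K p = 1 := hp
  have hset : (planesThru K p : Set _) =
      {W | p ≤ W ∧ W ≤ ⊤ ∧ finrank K W = finrank K p + 2} := by
    ext τ
    simp [mem_planesThru, pgPlane, hp, and_comm]
  rw [← Set.ncard_coe_finset, hset, ncard_between_eq le_top]
  apply ncard_finrank_eq_two_of_finrank_eq_three
  rw [finrank_map_mkQ le_top, finrank_top, finrank_fin_fun, hp]

theorem ncard_linesThru_pgLine {p : Submodule K (Fin 4 → K)} (hp : p ∈ pgPoint K) :
    (linesThru K (pgLine K) p).ncard = Nat.card K ^ 2 + Nat.card K + 1 := by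
  have hp : finrank K p = 1 := hp
  have hset : linesThru K (pgLine K) p =
      {W | p ≤ W ∧ W ≤ ⊤ ∧ finrank K W = finrank K p + 1} := by
    ext l
    simp [linesThru, pgLine, hp, and_comm]
  rw [hset, ncard_between_eq le_top]
  apply ncard_finrank_eq_one_of_finrank_eq_three
  rw [finrank_map_mkQ le_top, finrank_top, finrank_fin_fun, hp]

theorem ncard_pencilS_pgLine {p π : Submodule K (Fin 4 → K)} (hp : p ∈ pgPoint K)
    (hπ : π ∈ pgPlane K) (hpπ : p ≤ π) :
    (pencilS K (pgLine K) p π).ncard = Nat.card K + 1 := by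
  have hp : finrank K p = 1 := hp
  have hπ : finrank K π = 3 := hπ
  have hset : pencilS K (pgLine K) p π =
      {W | p ≤ W ∧ W ≤ π ∧ finrank K W = finrank K p + 1} := by
    ext l
    simp only [pencilS, pgLine, mem_ofPred_eq, hp]
    tauto
  rw [hset, ncard_between_eq hpπ]
  apply ncard_finrank_eq_one_of_finrank_eq_two
  rw [finrank_map_mkQ hpπ, hπ, hp]

end ProjectiveSpace

section Pencils

variable {K : Type} [Field K] [Finite K] {S : Set (Submodule K (Fin 4 → K))}
  {p ℓ : Submodule K (Fin 4 → K)}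

theorem sum_ncard_pencilS_planesThru (hS : S ⊆ pgLine K) :
    ∑ τ ∈ planesThru K p, (pencilS K S p τ).ncard =
      (linesThru K S p).ncard * (Nat.card K + 1) := by
  simp_rw [pencilS_eq_sep]
  refine Finset.sum_ncard_sep_eq_mul (Set.toFinite _) _ _ fun l hl => ?_
  have hplanes : {τ ∈ (planesThru K p : Set _) | l ≤ τ} = planesThru K l := by
    ext τ
    simp only [Finset.mem_coe, mem_planesThru, Set.mem_ofPred_eq]
    exact ⟨fun h => ⟨h.1.1, h.2⟩, fun h => ⟨⟨h.1, hl.2.trans h.2⟩, h.2⟩⟩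
  rw [hplanes, Set.ncard_coe_finset, card_planesThru_of_mem_pgLine (hS hl.1)]

theorem sum_ncard_pencilS_planesThru_of_notMem (hS : S ⊆ pgLine K) (hp : p ∈ pgPoint K)
    (hℓ : ℓ ∈ pgLine K) (hpℓ : p ≤ ℓ) (hℓS : ℓ ∉ S) :
    ∑ τ ∈ planesThru K ℓ, (pencilS K S p τ).ncard = (linesThru K S p).ncard := by
  simp_rw [pencilS_eq_sep]
  rw [← mul_one (linesThru K S p).ncard]
  refine Finset.sum_ncard_sep_eq_mul (Set.toFinite _) _ _ fun l hl => ?_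
  have hinf : ℓ ⊓ l ≠ ⊥ := fun h => by
    have hp : finrank K p = 1 := hp
    have hp0 : p = ⊥ := eq_bot_iff.mpr (h ▸ le_inf hpℓ hl.2)
    rw [hp0, finrank_bot] at hp
    exact zero_ne_one hp
  have h3 := finrank_sup_eq_three hℓ (hS hl.1) (fun h => hℓS (h ▸ hl.1)) hinf
  have hplanes : {τ ∈ (planesThru K ℓ : Set _) | l ≤ τ} = {ℓ ⊔ l} := by
    ext τ
    simp only [Finset.mem_coe, mem_planesThru, Set.mem_ofPred_eq, Set.mem_singleton_iff]
    constructor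
    · rintro ⟨⟨hτ, hℓτ⟩, hlτ⟩
      have hτ : finrank K τ = 3 := hτ
      exact (Submodule.eq_of_le_of_finrank_le (sup_le hℓτ hlτ) (by omega)).symm
    · rintro rfl
      exact ⟨⟨h3, le_sup_left⟩, le_sup_right⟩
  rw [hplanes, Set.ncard_singleton]

theorem ncard_pencilS_eq_of_not_le (hS : S ⊆ pgLine K) (hp : p ∈ pgPoint K)
    (hblack : (linesThru K S p).ncard = Nat.card K ^ 2)
    (hle : ∀ τ ∈ planesThru K p, (pencilS K S p τ).ncard ≤ Nat.card K)
    (hℓ : ℓ ∈ pgLine K) (hpℓ : p ≤ ℓ) (hℓS : ℓ ∉ S) {τ : Submodule K (Fin 4 → K)}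
    (hτ : τ ∈ planesThru K p) (hℓτ : ¬ℓ ≤ τ) :
    (pencilS K S p τ).ncard = Nat.card K := by
  classical
  have hsub := planesThru_subset hpℓ
  have hcard : (planesThru K p \ planesThru K ℓ).card = Nat.card K ^ 2 := by
    rw [Finset.card_sdiff_of_subset hsub, card_planesThru_of_mem_pgPoint hp,
      card_planesThru_of_mem_pgLine hℓ]
    omega
  refine Finset.eq_of_sum_sdiff_eq_card_mul hsub (fun σ hσ => hle σ (Finset.mem_sdiff.mp hσ).1)
    ?_ τ (Finset.mem_sdiff.mpr ⟨hτ, fun h => hℓτ (mem_planesThru.mp h).2⟩)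
  rw [sum_ncard_pencilS_planesThru hS, sum_ncard_pencilS_planesThru_of_notMem hS hp hℓ hpℓ hℓS,
    hblack, hcard]
  ring

theorem pencilS_eq_empty_of_ncard_lt (hS : S ⊆ pgLine K) (hp : p ∈ pgPoint K)
    (hblack : (linesThru K S p).ncard = Nat.card K ^ 2)
    (hle : ∀ τ ∈ planesThru K p, (pencilS K S p τ).ncard ≤ Nat.card K)
    {π : Submodule K (Fin 4 → K)} (hπ : π ∈ planesThru K p)
    (hlt : (pencilS K S p π).ncard < Nat.card K) :
    pencilS K S p π = ∅ := by
  set N := linesThru K (pgLine K) p \ linesThru K S p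
  have hN_sub : N ⊆ pencilS K (pgLine K) p π := by
    rintro ℓ ⟨⟨hℓ, hpℓ⟩, hℓS⟩
    refine ⟨hℓ, hpℓ, not_not.mp fun hℓπ => hlt.ne ?_⟩
    exact ncard_pencilS_eq_of_not_le hS hp hblack hle hℓ hpℓ (fun h => hℓS ⟨h, hpℓ⟩) hπ hℓπ
  have hN_eq : N = pencilS K (pgLine K) p π := by
    have hS_sub : linesThru K S p ⊆ linesThru K (pgLine K) p := fun l hl => ⟨hS hl.1, hl.2⟩
    refine Set.eq_of_subset_of_ncard_le hN_sub ?_ (Set.toFinite _)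
    rw [ncard_pencilS_pgLine hp (mem_planesThru.mp hπ).1 (mem_planesThru.mp hπ).2,
      Set.ncard_sdiff hS_sub, ncard_linesThru_pgLine hp, hblack]
    omega
  refine Set.eq_empty_iff_forall_notMem.mpr fun l hl => ?_
  have hlN : l ∈ N := hN_eq ▸ ⟨hS hl.1, hl.2.1, hl.2.2⟩
  exact hlN.2 ⟨hl.1, hl.2.1⟩

theorem ncard_pencilS_le {q : ℕ} (h2 : P2 K S q) (h2a : P2a K S q) (h2b : P2b K S q)
    {τ : Submodule K (Fin 4 → K)} (hτ : τ ∈ planesThru K p) (hp : p ∈ pgPoint K) :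
    (pencilS K S p τ).ncard ≤ q := by
  obtain ⟨hτ, hpτ⟩ := mem_planesThru.mp hτ
  rcases h2 τ hτ with hsec | htan
  · rcases h2b τ hτ hsec p hp hpτ with h | h | h <;> omega
  · rcases h2a τ hτ htan p hp hpτ with h | h <;> omega

end Pencils

theorem stmt_12_general (K : Type) [Field K] [Fintype K] (q : ℕ) (hq : Fintype.card K = q)
    (hq_odd : Odd q) (S : Set (Submodule K (Fin 4 → K))) (hS : S ⊆ pgLine K)
    (h2 : P2 K S q) (h2a : P2a K S q) (h2b : P2b K S q) :
    ∀ π, IsSecant K S q π → ∀ p, IsBlack K S q p → p ≤ π →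
      p ∈ gammaSet K S q π := by
  rw [← Nat.card_eq_fintype_card] at hq
  subst hq
  rintro π ⟨hπ, hπS⟩ p ⟨hp, hblack⟩ hpπ
  have hle : ∀ τ ∈ planesThru K p, (pencilS K S p τ).ncard ≤ Nat.card K :=
    fun τ hτ => ncard_pencilS_le h2 h2a h2b hτ hp
  have hπp : π ∈ planesThru K p := mem_planesThru.mpr ⟨hπ, hpπ⟩
  refine ⟨hp, hpπ, by_contra fun hne => ?_⟩
  have hempty :=
    pencilS_eq_empty_of_ncard_lt hS hp hblack hle hπp (lt_of_le_of_ne (hle π hπp) hne)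
  have hq3 : 3 ≤ Nat.card K := by
    obtain ⟨k, hk⟩ := hq_odd
    have := Finite.one_lt_card (α := K)
    omega
  rcases h2b π hπ hπS p hp hpπ with h | h | h <;> rw [hempty, Set.ncard_empty] at h <;> omega

/-- If `π` is a secant plane, then every black point contained in
`π` belongs to `γ(π)`. -/
theorem stmt_12 (K : Type) [Field K] [Fintype K] (q : ℕ) (hq : Fintype.card K = q)
    (hq_odd : Odd q) (S : Set (Submodule K (Fin 4 → K))) (hS : S ⊆ pgLine K)
    (h1 : P1 K S q) (h2 : P2 K S q) (h2a : P2a K S q) (h2b : P2b K S q) :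
    ∀ π, IsSecant K S q π → ∀ p, IsBlack K S q p → p ≤ π →
      p ∈ gammaSet K S q π :=
  stmt_12_general K q hq hq_odd S hS h2 h2a h2b
end

section
/- For every secant plane π, if λ_π denotes the number of black points contained in π, then |S| = λ_π·(q^2-q)/2 + (q^4+q^3+q^2+q)/2. In particular, the number of black points in a secant plane is the same for all secant planes. -/
open Submodule Set

/-! A line of `S` meets a plane `π` in `q + 1` points if it lies in `π` and in exactly one point
otherwise, so the incidences between the points of a secant plane `π` and the lines of `S` number
`|S| + q·|S_π|`. Counted from the points, they number `λ_π q² + (q² + q + 1 - λ_π) q(q+1)/2`,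
since the black points lie on `q²` lines of `S` and all others on `q(q+1)/2` by (P1). As
`|S_π| = q(q+1)/2`, this determines `|S|` in terms of `λ_π`, and conversely. -/

open Module Finset

section Counting

variable {K V : Type} [Field K] [Finite K] [AddCommGroup V] [Module K V]

theorem ncard_setOf_finrank_eq_one {n : ℕ} (h : finrank K V = n) :
    {H : Submodule K V | finrank K H = 1}.ncard = ∑ i ∈ range n, Nat.card K ^ i := by
  rw [← Nat.card_coe_set_eq, ← Projectivization.card_of_finrank K V h]
  exact Nat.card_congr (Projectivization.equivSubmodule K V).symm

theorem ncard_setOf_finrank_eq_one_le (W : Submodule K V) {n : ℕ} (h : finrank K W = n) :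
    {H : Submodule K V | finrank K H = 1 ∧ H ≤ W}.ncard =
      ∑ i ∈ range n, Nat.card K ^ i := by
  have himage : {H : Submodule K V | finrank K H = 1 ∧ H ≤ W} =
      Submodule.map W.subtype '' {H : Submodule K W | finrank K H = 1} := by
    ext H
    constructor
    · rintro ⟨hH, hHW⟩
      have hmap : Submodule.map W.subtype (comap W.subtype H) = H := by
        rw [map_comap_subtype, inf_eq_right.2 hHW]
      refine ⟨comap W.subtype H, ?_, hmap⟩
      rw [Set.mem_ofPred_eq, ← finrank_map_subtype_eq, hmap, hH]
    · rintro ⟨H', hH', rfl⟩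
      exact ⟨(finrank_map_subtype_eq W H').trans hH', map_subtype_le W H'⟩
  rw [himage, Set.ncard_image_of_injective _ (map_injective_of_injective W.subtype_injective),
    ncard_setOf_finrank_eq_one h]

omit [Finite K] in
theorem finrank_inf_add_one_of_not_le [FiniteDimensional K V] {l π : Submodule K V}
    (hπ : finrank K π + 1 = finrank K V) (hl : ¬ l ≤ π) :
    finrank K ↥(l ⊓ π) + 1 = finrank K l := by
  have hsup : finrank K ↥(l ⊔ π) = finrank K V := by
    have hlt : π < l ⊔ π := lt_of_le_of_ne le_sup_right fun h => hl (h ▸ le_sup_left)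
    have := finrank_lt_finrank_of_lt hlt
    have := (l ⊔ π).finrank_le
    omega
  have := finrank_sup_add_finrank_inf_eq l π
  omega

open Classical in
theorem ncard_points_on_line_in_hyperplane [FiniteDimensional K V] {l π : Submodule K V}
    (hl : finrank K l = 2) (hπ : finrank K π + 1 = finrank K V) :
    {H : Submodule K V | finrank K H = 1 ∧ H ≤ l ∧ H ≤ π}.ncard =
      1 + if l ≤ π then Nat.card K else 0 := by
  simp_rw [← le_inf_iff]
  split_ifs with hlπ
  · rw [inf_eq_left.2 hlπ, ncard_setOf_finrank_eq_one_le l hl]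
    simp [Finset.sum_range_succ, add_comm]
  · have hinf : finrank K ↥(l ⊓ π) = 1 := by
      have := finrank_inf_add_one_of_not_le hπ hlπ
      omega
    rw [ncard_setOf_finrank_eq_one_le _ hinf]
    simp

end Counting

open Classical in
theorem sum_ncard_sep_comm {α β : Type*} (P : Set α) (S : Set β) [Fintype P] [Fintype S]
    (r : α → β → Prop) :
    ∑ p ∈ P.toFinset, {l ∈ S | r p l}.ncard =
      ∑ l ∈ S.toFinset, {p ∈ P | r p l}.ncard := by
  have hS (p : α) : {l ∈ S | r p l}.ncard = (S.toFinset.bipartiteAbove r p).card := by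
    rw [← Set.ncard_coe_finset]; congr 1; ext; simp [bipartiteAbove]
  have hP (l : β) : {p ∈ P | r p l}.ncard = (P.toFinset.bipartiteBelow r l).card := by
    rw [← Set.ncard_coe_finset]; congr 1; ext; simp [bipartiteBelow]
  simp only [hS, hP]
  exact sum_card_bipartiteAbove_eq_sum_card_bipartiteBelow r

section PG

variable {K : Type} [Field K] [Fintype (Submodule K (Fin 4 → K))]
  {S : Set (Submodule K (Fin 4 → K))} {π : Submodule K (Fin 4 → K)}

open Classical in
theorem sum_ncard_linesThru_eq [Fintype K] (hS : S ⊆ pgLine K) (hπ : π ∈ pgPlane K) :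
    ∑ p ∈ {p | p ∈ pgPoint K ∧ p ≤ π}.toFinset, (linesThru K S p).ncard =
      S.ncard + Fintype.card K * (linesIn K S π).ncard := by
  have hπ' : finrank K π + 1 = finrank K (Fin 4 → K) := by
    rw [finrank_fin_fun]; exact congrArg (· + 1) hπ
  have hpoints : ∀ l ∈ S.toFinset, {p ∈ {p | p ∈ pgPoint K ∧ p ≤ π} | p ≤ l}.ncard =
      1 + if l ≤ π then Fintype.card K else 0 := by
    intro l hl
    rw [← Nat.card_eq_fintype_card, ← ncard_points_on_line_in_hyperplane
      (hS (Set.mem_toFinset.1 hl)) hπ']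
    congr 1
    ext p
    simp only [Set.mem_ofPred_eq, pgPoint]
    tauto
  unfold linesThru
  rw [sum_ncard_sep_comm _ _ (· ≤ ·), sum_congr rfl hpoints, sum_add_distrib, sum_ite,
    sum_const_zero, sum_const, sum_const, smul_eq_mul, smul_eq_mul, add_zero, mul_one,
    Set.ncard_eq_toFinset_card', mul_comm, linesIn, Set.ncard_eq_toFinset_card']
  congr 3
  ext
  simp

open Classical in
theorem sum_ncard_linesThru_add_of_P1 {q : ℕ} (h1 : P1 K S q) (π : Submodule K (Fin 4 → K)) :
    ∑ p ∈ {p | p ∈ pgPoint K ∧ p ≤ π}.toFinset, (linesThru K S p).ncard +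
        {p | IsBlack K S q p ∧ p ≤ π}.ncard * (q * (q + 1) / 2) =
      {p | IsBlack K S q p ∧ p ≤ π}.ncard * q ^ 2 +
        {p | p ∈ pgPoint K ∧ p ≤ π}.ncard * (q * (q + 1) / 2) := by
  set P := {p | p ∈ pgPoint K ∧ p ≤ π}.toFinset with hP
  have hblack : {p | IsBlack K S q p ∧ p ≤ π}.ncard = #{p ∈ P | IsBlack K S q p} := by
    rw [← Set.ncard_coe_finset]
    congr 1
    ext p
    rw [Finset.mem_coe, Finset.mem_filter, hP, Set.mem_toFinset]
    exact ⟨fun h => ⟨⟨h.1.1, h.2⟩, h.1⟩, fun h => ⟨h.2, h.1.2⟩⟩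
  have hwhite : ∀ p ∈ {p ∈ P | ¬ IsBlack K S q p},
      (linesThru K S p).ncard = q * (q + 1) / 2 := by
    intro p hp
    rw [Finset.mem_filter, hP, Set.mem_toFinset] at hp
    exact (h1.1 p hp.1.1).resolve_right fun h => hp.2 ⟨hp.1.1, h⟩
  have hsplit := card_filter_add_card_filter_not (s := P) (IsBlack K S q)
  rw [← sum_filter_add_sum_filter_not _ (IsBlack K S q), sum_congr rfl hwhite,
    sum_congr rfl fun p hp => (Finset.mem_filter.1 hp).2.2, sum_const, sum_const, smul_eq_mul,
    smul_eq_mul, hblack, Set.ncard_eq_toFinset_card', ← hP, ← hsplit]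
  ring

end PG

theorem ncard_eq_of_isSecant {K : Type} [Field K] [Fintype K] {q : ℕ} (hq : Fintype.card K = q)
    {S : Set (Submodule K (Fin 4 → K))} (hS : S ⊆ pgLine K) (h1 : P1 K S q)
    {π : Submodule K (Fin 4 → K)} (hπ : IsSecant K S q π) :
    S.ncard = {p | IsBlack K S q p ∧ p ≤ π}.ncard * ((q ^ 2 - q) / 2) +
      (q ^ 4 + q ^ 3 + q ^ 2 + q) / 2 := by
  let := Fintype.ofFinite (Submodule K (Fin 4 → K))
  have hpoints : {p | p ∈ pgPoint K ∧ p ≤ π}.ncard = q ^ 2 + q + 1 := by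
    rw [← hq, ← Nat.card_eq_fintype_card]
    refine (ncard_setOf_finrank_eq_one_le π hπ.1).trans ?_
    simp only [sum_range_succ, range_zero, sum_empty, pow_zero, pow_one]
    ring
  have hincidences := sum_ncard_linesThru_add_of_P1 h1 π
  rw [sum_ncard_linesThru_eq hS hπ.1, hπ.2, hpoints, hq] at hincidences
  obtain ⟨h, hh⟩ : ∃ h, q * (q + 1) = 2 * h :=
    even_iff_two_dvd.1 (Nat.even_mul_succ_self q)
  have hsq : q ^ 2 + q = 2 * h := by rw [← hh]; ring
  have hqh : q ≤ h := by nlinarith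
  have hdiv₁ : (q ^ 2 - q) / 2 = h - q := by omega
  have hdiv₂ : (q ^ 4 + q ^ 3 + q ^ 2 + q) / 2 = h * (q ^ 2 + 1) := by
    rw [show q ^ 4 + q ^ 3 + q ^ 2 + q = 2 * (h * (q ^ 2 + 1)) by rw [← mul_assoc, ← hsq]; ring,
      Nat.mul_div_cancel_left _ two_pos]
  rw [hh, Nat.mul_div_cancel_left _ two_pos] at hincidences
  rw [hdiv₁, hdiv₂]
  zify [hqh] at hincidences hsq ⊢
  linear_combination hincidences + {p | IsBlack K S q p ∧ p ≤ π}.ncard * hsq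

theorem stmt_14_general (K : Type) [Field K] [Fintype K] (q : ℕ) (hq : Fintype.card K = q)
    (S : Set (Submodule K (Fin 4 → K))) (hS : S ⊆ pgLine K)
    (h1 : P1 K S q) :
    (∀ π, IsSecant K S q π →
      S.ncard = {p | IsBlack K S q p ∧ p ≤ π}.ncard * ((q ^ 2 - q) / 2) +
        (q ^ 4 + q ^ 3 + q ^ 2 + q) / 2) ∧
    (∀ π π', IsSecant K S q π → IsSecant K S q π' →
      {p | IsBlack K S q p ∧ p ≤ π}.ncard =
        {p | IsBlack K S q p ∧ p ≤ π'}.ncard) := by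
  have hcount := fun π (hπ : IsSecant K S q π) => ncard_eq_of_isSecant hq hS h1 hπ
  refine ⟨hcount, fun π π' hπ hπ' => ?_⟩
  have hq2 : 2 ≤ q := hq ▸ Fintype.one_lt_card
  have hpos : 0 < (q ^ 2 - q) / 2 := by
    have : 2 * q ≤ q ^ 2 := by nlinarith
    omega
  exact Nat.eq_of_mul_eq_mul_right hpos
    (Nat.add_right_cancel ((hcount π hπ).symm.trans (hcount π' hπ')))

/-- For every secant plane `π`, with `λ_π` the number of black
points of `π`, `|S| = λ_π(q^2-q)/2 + (q^4+q^3+q^2+q)/2`; in particular the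
number of black points is the same in all secant planes. -/
theorem stmt_14 (K : Type) [Field K] [Fintype K] (q : ℕ) (hq : Fintype.card K = q)
    (hq_odd : Odd q) (S : Set (Submodule K (Fin 4 → K))) (hS : S ⊆ pgLine K)
    (h1 : P1 K S q) (h2 : P2 K S q) (h2a : P2a K S q) (h2b : P2b K S q) :
    (∀ π, IsSecant K S q π →
      S.ncard = {p | IsBlack K S q p ∧ p ≤ π}.ncard * ((q ^ 2 - q) / 2) +
        (q ^ 4 + q ^ 3 + q ^ 2 + q) / 2) ∧
    (∀ π π', IsSecant K S q π → IsSecant K S q π' →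
      {p | IsBlack K S q p ∧ p ≤ π}.ncard =
        {p | IsBlack K S q p ∧ p ≤ π'}.ncard) :=
  stmt_14_general K q hq S hS h1
end
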